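/- Let 0 ≤ m₀ ≤ m₁ be real numbers and let k ≥ 1 be a natural number. Define the Poisson-based probability of error with equiprobable states as P_e = (1/2)·(∑_{x=k}^∞ Poi(x;m₀) + ∑_{x=0}^{k-1} Poi(x;m₁)), and define the vector (Helstrom) probability of error as Q_e = (1/2)·(1 − √(1 − e^{−(m₁−m₀)})). Then Q_e ≤ P_e. -/
import Mathlib

/-- Poisson probability mass function with mean `m` evaluated at `x`
(with the convention `0 ^ 0 = 1`). -/
noncomputable def poi (m : ℝ) (x : ℕ) : ℝ := Real.exp (-m) * m ^ x / (Nat.factorial x)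

lemma poi_nonneg {m : ℝ} (hm : 0 ≤ m) (x : ℕ) : 0 ≤ poi m x := by
  unfold poi; positivity

lemma summable_poi (m : ℝ) : Summable (poi m) := by
  have h : poi m = fun x => Real.exp (-m) * (m ^ x / x.factorial) := by
    funext x; simp [poi, mul_div_assoc]
  rw [h]; exact (Real.summable_pow_div_factorial m).mul_left _

lemma tsum_exp_aux (c m : ℝ) :
    (∑' x : ℕ, c * m ^ x / x.factorial) = c * Real.exp m := by
  have hexp : (∑' x : ℕ, (m ^ x / x.factorial : ℝ)) = Real.exp m := by
    rw [Real.exp_eq_exp_ℝ, NormedSpace.exp_eq_tsum_div]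
  calc (∑' x : ℕ, c * m ^ x / x.factorial)
      = ∑' x : ℕ, c * (m ^ x / x.factorial) := by
        apply tsum_congr; intro x; ring
    _ = c * ∑' x : ℕ, (m ^ x / x.factorial : ℝ) := tsum_mul_left
    _ = c * Real.exp m := by rw [hexp]

lemma tsum_poi (m : ℝ) : ∑' x, poi m x = 1 := by
  unfold poi
  rw [tsum_exp_aux, ← Real.exp_add]; simp

/-- The vector (Helstrom) probability of error is at most the Poisson-based
probability of error, for equiprobable states. -/
theorem vector_prob_error_le_poisson (m₀ m₁ : ℝ) (hm₀ : 0 ≤ m₀) (hm : m₀ ≤ m₁)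
    (k : ℕ) (hk : 1 ≤ k) :
    (1 / 2) * (1 - Real.sqrt (1 - Real.exp (-(m₁ - m₀)))) ≤
      (1 / 2) * ((∑' x : ℕ, if k ≤ x then poi m₀ x else 0) +
        ∑ x ∈ Finset.range k, poi m₁ x) := by
  have hm₁ : 0 ≤ m₁ := le_trans hm₀ hm
  set p₀ := poi m₀ with hp₀def
  set p₁ := poi m₁ with hp₁def
  have hp₀ : ∀ x, 0 ≤ p₀ x := poi_nonneg hm₀
  have hp₁ : ∀ x, 0 ≤ p₁ x := poi_nonneg hm₁
  set pmin : ℕ → ℝ := fun x => min (p₀ x) (p₁ x) with hpmin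
  set pmax : ℕ → ℝ := fun x => max (p₀ x) (p₁ x) with hpmax
  have hmin_nonneg : ∀ x, 0 ≤ pmin x := fun x => le_min (hp₀ x) (hp₁ x)
  have hmax_nonneg : ∀ x, 0 ≤ pmax x := fun x => le_trans (hp₀ x) (le_max_left _ _)
  have hsum₀ := summable_poi m₀
  have hsum₁ := summable_poi m₁
  have hsmin : Summable pmin :=
    Summable.of_nonneg_of_le hmin_nonneg (fun x => min_le_left _ _) hsum₀
  have hsmax : Summable pmax := by
    have h : ∀ x, pmax x ≤ p₀ x + p₁ x := fun x =>
      max_le (le_add_of_nonneg_right (hp₁ x)) (le_add_of_nonneg_left (hp₀ x))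
    exact Summable.of_nonneg_of_le hmax_nonneg h (hsum₀.add hsum₁)
  set S := ∑' x, pmin x with hS
  set T := ∑' x, pmax x with hT
  have hST : S + T = 2 := by
    have h1 : ∀ x, pmin x + pmax x = p₀ x + p₁ x := fun x => min_add_max _ _
    have h2 : S + T = ∑' x, (p₀ x + p₁ x) := by
      rw [hS, hT, ← Summable.tsum_add hsmin hsmax]
      exact tsum_congr h1
    rw [h2, Summable.tsum_add hsum₀ hsum₁, tsum_poi, tsum_poi]; norm_num
  have hS0 : 0 ≤ S := tsum_nonneg hmin_nonneg
  have hT0 : 0 ≤ T := tsum_nonneg hmax_nonneg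
  -- Bhattacharyya coefficient computation
  have hsqrt_eq : ∀ x : ℕ, Real.sqrt (p₀ x * p₁ x) =
      Real.exp (-((m₀ + m₁) / 2)) * (Real.sqrt (m₀ * m₁)) ^ x / x.factorial := by
    intro x
    have hc : (0:ℝ) ≤ Real.exp (-((m₀ + m₁) / 2)) * (Real.sqrt (m₀ * m₁)) ^ x
        / x.factorial := by positivity
    have hsq : p₀ x * p₁ x =
        (Real.exp (-((m₀ + m₁) / 2)) * (Real.sqrt (m₀ * m₁)) ^ x / x.factorial) ^ 2 := by
      have he : (Real.exp (-((m₀ + m₁) / 2))) ^ 2 = Real.exp (-m₀) * Real.exp (-m₁) := by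
        rw [sq, ← Real.exp_add, ← Real.exp_add]; ring_nf
      have hp : ((Real.sqrt (m₀ * m₁)) ^ x) ^ 2 = m₀ ^ x * m₁ ^ x := by
        rw [← pow_mul, mul_comm x 2, pow_mul, Real.sq_sqrt (by positivity), mul_pow]
      simp only [hp₀def, hp₁def, poi]
      rw [div_pow, mul_pow, he, hp]
      ring
    rw [hsq, Real.sqrt_sq hc]
  set B := ∑' x, Real.sqrt (p₀ x * p₁ x) with hBdef
  have hBval : B = Real.exp (Real.sqrt (m₀ * m₁) - (m₀ + m₁) / 2) := by
    rw [hBdef]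
    rw [tsum_congr hsqrt_eq, tsum_exp_aux, ← Real.exp_add]
    ring_nf
  have hB0 : 0 ≤ B := by rw [hBval]; positivity
  have hBsummable : Summable (fun x => Real.sqrt (p₀ x * p₁ x)) := by
    rw [funext hsqrt_eq]
    have := (Real.summable_pow_div_factorial (Real.sqrt (m₀ * m₁))).mul_left
      (Real.exp (-((m₀ + m₁) / 2)))
    simpa [mul_div_assoc] using this
  -- Cauchy-Schwarz: B ≤ √S * √T
  have hCS : B ≤ Real.sqrt S * Real.sqrt T := by
    apply Summable.tsum_le_of_sum_le hBsummable
    intro s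
    have h1 : ∀ x ∈ s, Real.sqrt (p₀ x * p₁ x) = Real.sqrt (pmin x) * Real.sqrt (pmax x) := by
      intro x _
      rw [← Real.sqrt_mul (hmin_nonneg x)]
      congr 1
      simp only [hpmin, hpmax]
      rcases le_total (p₀ x) (p₁ x) with h | h
      · rw [min_eq_left h, max_eq_right h]
      · rw [min_eq_right h, max_eq_left h]; ring
    rw [Finset.sum_congr rfl h1]
    calc ∑ x ∈ s, Real.sqrt (pmin x) * Real.sqrt (pmax x)
        ≤ Real.sqrt (∑ x ∈ s, pmin x) * Real.sqrt (∑ x ∈ s, pmax x) :=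
          Real.sum_sqrt_mul_sqrt_le s hmin_nonneg hmax_nonneg
      _ ≤ Real.sqrt S * Real.sqrt T := by
          apply mul_le_mul
          · exact Real.sqrt_le_sqrt (Summable.sum_le_tsum s (fun x _ => hmin_nonneg x) hsmin)
          · exact Real.sqrt_le_sqrt (Summable.sum_le_tsum s (fun x _ => hmax_nonneg x) hsmax)
          · positivity
          · positivity
  have hB2 : B ^ 2 ≤ S * T := by
    calc B ^ 2 ≤ (Real.sqrt S * Real.sqrt T) ^ 2 := by
          apply pow_le_pow_left₀ hB0 hCS
      _ = S * T := by
          rw [mul_pow, Real.sq_sqrt hS0, Real.sq_sqrt hT0]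
  -- e^{-(m₁-m₀)} ≤ B²
  have hexp_le : Real.exp (-(m₁ - m₀)) ≤ B ^ 2 := by
    rw [hBval, ← Real.exp_nat_mul]
    apply Real.exp_le_exp.2
    have hs : m₀ ≤ Real.sqrt (m₀ * m₁) := by
      rw [Real.sqrt_mul hm₀]
      calc m₀ = Real.sqrt m₀ * Real.sqrt m₀ := (Real.mul_self_sqrt hm₀).symm
        _ ≤ Real.sqrt m₀ * Real.sqrt m₁ :=
            mul_le_mul_of_nonneg_left (Real.sqrt_le_sqrt hm) (Real.sqrt_nonneg _)
    push_cast
    nlinarith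
  -- 1 - √(1 - e^{-(m₁-m₀)}) ≤ S
  have hkey : 1 - Real.sqrt (1 - Real.exp (-(m₁ - m₀))) ≤ S := by
    have h1 : (1 - S) ^ 2 ≤ 1 - Real.exp (-(m₁ - m₀)) := by
      have hTS : T = 2 - S := by linarith
      nlinarith [hB2, hexp_le]
    have h2 : 1 - S ≤ Real.sqrt (1 - Real.exp (-(m₁ - m₀))) := by
      calc 1 - S ≤ |1 - S| := le_abs_self _
        _ = Real.sqrt ((1 - S) ^ 2) := (Real.sqrt_sq_eq_abs _).symm
        _ ≤ Real.sqrt (1 - Real.exp (-(m₁ - m₀))) := Real.sqrt_le_sqrt h1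
    linarith
  -- S ≤ the error sum
  have hfinal : S ≤ (∑' x : ℕ, if k ≤ x then p₀ x else 0) +
      ∑ x ∈ Finset.range k, p₁ x := by
    set f₁ : ℕ → ℝ := fun x => if k ≤ x then p₀ x else 0 with hf₁
    set f₂ : ℕ → ℝ := fun x => if k ≤ x then 0 else p₁ x with hf₂
    have hf₁nonneg : ∀ x, 0 ≤ f₁ x := by
      intro x; simp only [hf₁]; split <;> [exact hp₀ x; exact le_refl 0]
    have hf₂nonneg : ∀ x, 0 ≤ f₂ x := by
      intro x; simp only [hf₂]; split <;> [exact le_refl 0; exact hp₁ x]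
    have hsf₁ : Summable f₁ := by
      apply Summable.of_nonneg_of_le hf₁nonneg _ hsum₀
      intro x; simp only [hf₁]; split <;> [exact le_refl _; exact hp₀ x]
    have hsf₂ : Summable f₂ := by
      apply Summable.of_nonneg_of_le hf₂nonneg _ hsum₁
      intro x; simp only [hf₂]; split <;> [exact hp₁ x; exact le_refl _]
    have hle : ∀ x, pmin x ≤ f₁ x + f₂ x := by
      intro x
      simp only [hf₁, hf₂, hpmin]
      split
      · simpa using min_le_left (p₀ x) (p₁ x)
      · simpa using min_le_right (p₀ x) (p₁ x)
    have htsum₂ : ∑' x, f₂ x = ∑ x ∈ Finset.range k, p₁ x := by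
      rw [tsum_eq_sum (s := Finset.range k)]
      · apply Finset.sum_congr rfl
        intro x hx
        simp only [hf₂, if_neg (not_le.2 (Finset.mem_range.1 hx))]
      · intro x hx
        simp only [hf₂, if_pos (not_lt.1 (fun h => hx (Finset.mem_range.2 h)))]
    calc S ≤ ∑' x, (f₁ x + f₂ x) := Summable.tsum_le_tsum hle hsmin (hsf₁.add hsf₂)
      _ = (∑' x, f₁ x) + ∑' x, f₂ x := Summable.tsum_add hsf₁ hsf₂
      _ = (∑' x : ℕ, if k ≤ x then p₀ x else 0) + ∑ x ∈ Finset.range k, p₁ x := by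
          rw [htsum₂]
  have := le_trans hkey hfinal
  linarith
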